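/- arXiv:1701.01989 — 4 statements merged into one kernel-verified Lean document; each statement's English description precedes it below -/
import Mathlib

section
/- Let h : (0,∞) → ℝ be twice differentiable and satisfy the second-order linear ODE h''(r) + (3/r − r/2)·h'(r) = h(r) for all r > 0. Then there exist constants c₁, c₂ ∈ ℝ such that h(r) = c₁·e^{r²/4}·r^{−2} + c₂·r^{−2} for all r > 0. -/
/-!
Writing `G = (r² h)' = 2 r h + r² h'`, the equation becomes the first-order equation
`G' = (1/r + r/2) G`, whose solutions are the multiples of `r e^{r²/4}`. Hence
`(r² h)' = c r e^{r²/4} = (2 c e^{r²/4})'`, so `r² h = 2 c e^{r²/4} + c₂`.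
-/

namespace IsOpen

variable {𝕜 G : Type*} [RCLike 𝕜] [NormedAddCommGroup G] [NormedSpace 𝕜 G] {s : Set 𝕜}

theorem exists_eqOn_add_of_hasDerivAt (hs : IsOpen s) (hs' : IsPreconnected s)
    {f g f' : 𝕜 → G} (hf : ∀ x ∈ s, HasDerivAt f (f' x) x)
    (hg : ∀ x ∈ s, HasDerivAt g (f' x) x) : ∃ a, s.EqOn f (g · + a) :=
  hs.exists_eq_add_of_deriv_eq hs' (fun x hx => (hf x hx).differentiableAt.differentiableWithinAt)
    (fun x hx => (hg x hx).differentiableAt.differentiableWithinAt)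
    (fun x hx => (hf x hx).deriv.trans (hg x hx).deriv.symm)

theorem exists_eqOn_const_mul_of_hasDerivAt_mul (hs : IsOpen s) (hs' : IsPreconnected s)
    {f g a : 𝕜 → 𝕜} (hf : ∀ x ∈ s, HasDerivAt f (a x * f x) x)
    (hg : ∀ x ∈ s, HasDerivAt g (a x * g x) x) (hg0 : ∀ x ∈ s, g x ≠ 0) :
    ∃ c, s.EqOn f (c * g ·) := by
  have hquot : ∀ x ∈ s, HasDerivAt (fun y => f y / g y) 0 x := fun x hx =>
    ((hf x hx).fun_div (hg x hx) (hg0 x hx)).congr_deriv (by ring)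
  obtain ⟨c, hc⟩ := hs.exists_eqOn_add_of_hasDerivAt hs' hquot
    (fun x _ => hasDerivAt_const x (0 : 𝕜))
  exact ⟨c, fun x hx => (div_eq_iff (hg0 x hx)).1 (by simpa using hc hx)⟩

end IsOpen

theorem hasDerivAt_sq_mul {h : ℝ → ℝ} {r : ℝ} (hh : DifferentiableAt ℝ h r) :
    HasDerivAt (fun s => s ^ 2 * h s) (2 * r * h r + r ^ 2 * deriv h r) r := by
  simpa using (hasDerivAt_pow 2 r).fun_mul hh.hasDerivAt

theorem hasDerivAt_mul_exp_sq_div_four {r : ℝ} (hr : r ≠ 0) :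
    HasDerivAt (fun s => s * Real.exp (s ^ 2 / 4))
      ((1 / r + r / 2) * (r * Real.exp (r ^ 2 / 4))) r := by
  refine ((hasDerivAt_id r).fun_mul ((hasDerivAt_pow 2 r).div_const 4).exp).congr_deriv ?_
  simp only [id, Nat.cast_ofNat]
  field_simp
  ring

theorem hasDerivAt_deriv_sq_mul_of_radial_ode {h : ℝ → ℝ} {r : ℝ} (hr : r ≠ 0)
    (hh : DifferentiableAt ℝ h r) (hh' : DifferentiableAt ℝ (deriv h) r)
    (hode : deriv (deriv h) r + (3 / r - r / 2) * deriv h r = h r) :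
    HasDerivAt (fun s => 2 * s * h s + s ^ 2 * deriv h s)
      ((1 / r + r / 2) * (2 * r * h r + r ^ 2 * deriv h r)) r := by
  refine (((hasDerivAt_id r).const_mul 2).fun_mul hh.hasDerivAt |>.fun_add
    ((hasDerivAt_pow 2 r).fun_mul hh'.hasDerivAt)).congr_deriv ?_
  rw [← hode]
  simp only [id, Nat.cast_ofNat]
  field_simp
  ring

/-- **Radial ODE for drifted eigenfunctions.**
If `h : (0,∞) → ℝ` is twice differentiable and satisfies
`h''(r) + (3/r − r/2)·h'(r) = h(r)` for all `r > 0`, then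
`h(r) = c₁·e^{r²/4}·r⁻² + c₂·r⁻²` for some constants `c₁, c₂`. -/
theorem radial_ode_solution
    (h : ℝ → ℝ)
    (hdiff : ∀ r : ℝ, 0 < r → DifferentiableAt ℝ h r)
    (hdiff' : ∀ r : ℝ, 0 < r → DifferentiableAt ℝ (deriv h) r)
    (hode : ∀ r : ℝ, 0 < r →
      deriv (deriv h) r + (3 / r - r / 2) * deriv h r = h r) :
    ∃ c₁ c₂ : ℝ, ∀ r : ℝ, 0 < r →
      h r = c₁ * Real.exp (r ^ 2 / 4) / r ^ 2 + c₂ / r ^ 2 := by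
  obtain ⟨c, hc⟩ := isOpen_Ioi.exists_eqOn_const_mul_of_hasDerivAt_mul isPreconnected_Ioi
    (fun r (hr : 0 < r) =>
      hasDerivAt_deriv_sq_mul_of_radial_ode hr.ne' (hdiff r hr) (hdiff' r hr) (hode r hr))
    (fun r (hr : 0 < r) => hasDerivAt_mul_exp_sq_div_four hr.ne')
    (fun r (hr : 0 < r) => by positivity)
  have hexp : ∀ r : ℝ, HasDerivAt (fun s => 2 * c * Real.exp (s ^ 2 / 4))
      (c * (r * Real.exp (r ^ 2 / 4))) r := fun r =>
    (((hasDerivAt_pow 2 r).div_const 4).exp.const_mul (2 * c)).congr_deriv <| by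
      simp only [Nat.cast_ofNat, Nat.add_one_sub_one, pow_one]
      ring
  obtain ⟨c₂, hc₂⟩ := isOpen_Ioi.exists_eqOn_add_of_hasDerivAt isPreconnected_Ioi
    (fun r (hr : 0 < r) => (hasDerivAt_sq_mul (hdiff r hr)).congr_deriv (hc hr)) (fun r _ => hexp r)
  refine ⟨2 * c, c₂, fun r hr => ?_⟩
  have hsq : r ^ 2 * h r = 2 * c * Real.exp (r ^ 2 / 4) + c₂ := hc₂ hr
  field_simp
  linarith
end

section
/- The functions v(x) = |x|^{−2} and w(x) = e^{|x|²/4}·|x|^{−2}, defined on ℝ⁴ ∖ {0}, both satisfy the drifted eigenfunction equation: Δv(x) − (1/2)⟨x, ∇v(x)⟩ = v(x) and Δw(x) − (1/2)⟨x, ∇w(x)⟩ = w(x) for every x ∈ ℝ⁴ with x ≠ 0. -/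
/-!
For a radial function `v y = φ (‖y‖ ^ 2)` and `t = ‖x‖ ^ 2` one has `Dv(x) e = 2 φ'(t) ⟪x, e⟫`,
hence `Dv(x) x = 2 t φ'(t)` and, summing second derivatives over an orthonormal basis of `ℝⁿ`,
`Δv(x) = 2 n φ'(t) + 4 t φ''(t)`. In `ℝ⁴` the equation `Δv − ½ Dv(x) x = v` thus becomes the ODE
`4 t φ'' + (8 − t) φ' = φ` on `(0, ∞)`, which `t⁻¹` and `e^{t/4} t⁻¹` both solve.
-/

open scoped RealInnerProductSpace

noncomputable abbrev E4 : Type := EuclideanSpace ℝ (Fin 4)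

/-- The Euclidean Laplacian on `ℝ⁴`: sum of pure second partial derivatives in the
standard orthonormal directions. -/
noncomputable def lap (v : E4 → ℝ) (x : E4) : ℝ :=
  ∑ i : Fin 4,
    fderiv ℝ (fun y : E4 => fderiv ℝ v y (EuclideanSpace.single i (1 : ℝ))) x
      (EuclideanSpace.single i (1 : ℝ))

/-- The drifted eigenfunction equation `Δv(x) − (1/2)⟨x, ∇v(x)⟩ = v(x)` at `x`,
with the weight `f(x) = |x|²/4` (so `∇f(x) = x/2` and `⟨∇f(x), ∇v(x)⟩ = (1/2)·Dv(x)(x)`). -/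
def DriftedEigen (v : E4 → ℝ) (x : E4) : Prop :=
  lap v x - (1 / 2) * fderiv ℝ v x x = v x

open Filter Topology

section Radial

variable {E : Type*} [NormedAddCommGroup E] [InnerProductSpace ℝ E] {φ φ' : ℝ → ℝ} {x : E}

theorem hasFDerivAt_comp_norm_sq {d : ℝ} (hφ : HasDerivAt φ d (‖x‖ ^ 2)) :
    HasFDerivAt (fun y : E => φ (‖y‖ ^ 2)) ((2 * d) • innerSL ℝ x) x :=
  (hφ.comp_hasFDerivAt x (hasStrictFDerivAt_norm_sq x).hasFDerivAt).congr_fderiv <| by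
    ext e
    simp only [smul_apply, innerSL_apply_apply, smul_eq_mul, nsmul_eq_mul]
    ring

theorem fderiv_comp_norm_sq_apply {d : ℝ} (hφ : HasDerivAt φ d (‖x‖ ^ 2)) (e : E) :
    fderiv ℝ (fun y : E => φ (‖y‖ ^ 2)) x e = 2 * d * ⟪x, e⟫ := by
  simp [(hasFDerivAt_comp_norm_sq hφ).fderiv]

theorem fderiv_fderiv_comp_norm_sq_apply {d : ℝ}
    (hφ : ∀ᶠ t in 𝓝 (‖x‖ ^ 2), HasDerivAt φ (φ' t) t) (hφ' : HasDerivAt φ' d (‖x‖ ^ 2))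
    (e : E) :
    fderiv ℝ (fun y : E => fderiv ℝ (fun z : E => φ (‖z‖ ^ 2)) y e) x e
      = 2 * φ' (‖x‖ ^ 2) * ‖e‖ ^ 2 + 4 * d * ⟪x, e⟫ ^ 2 := by
  have hfirst : (fun y : E => fderiv ℝ (fun z : E => φ (‖z‖ ^ 2)) y e)
      =ᶠ[𝓝 x] fun y => 2 * φ' (‖y‖ ^ 2) * ⟪e, y⟫ :=
    ((continuous_norm.pow 2).continuousAt.eventually hφ).mono fun y hy =>
      (fderiv_comp_norm_sq_apply hy e).trans (by rw [real_inner_comm]; rfl)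
  have hsecond : HasFDerivAt (fun y => 2 * φ' (‖y‖ ^ 2) * ⟪e, y⟫) _ x :=
    ((hasFDerivAt_comp_norm_sq hφ').const_mul 2).fun_mul (innerSL ℝ e).hasFDerivAt
  rw [hfirst.fderiv_eq, hsecond.fderiv]
  simp only [add_apply, smul_apply, innerSL_apply_apply,
    smul_eq_mul, real_inner_self_eq_norm_sq, real_inner_comm x]
  ring

theorem OrthonormalBasis.sum_fderiv_fderiv_comp_norm_sq {ι : Type*} [Fintype ι]
    (b : OrthonormalBasis ι ℝ E) {d : ℝ}
    (hφ : ∀ᶠ t in 𝓝 (‖x‖ ^ 2), HasDerivAt φ (φ' t) t) (hφ' : HasDerivAt φ' d (‖x‖ ^ 2)) :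
    ∑ i, fderiv ℝ (fun y : E => fderiv ℝ (fun z : E => φ (‖z‖ ^ 2)) y (b i)) x (b i)
      = 2 * Fintype.card ι * φ' (‖x‖ ^ 2) + 4 * ‖x‖ ^ 2 * d := by
  have hparseval := b.sum_inner_mul_inner x x
  simp only [real_inner_self_eq_norm_sq, real_inner_comm x, ← sq] at hparseval
  simp only [fderiv_fderiv_comp_norm_sq_apply hφ hφ', Finset.sum_add_distrib, b.norm_eq_one,
    ← Finset.mul_sum, hparseval, one_pow, mul_one, Finset.sum_const, Finset.card_univ,
    nsmul_eq_mul]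
  ring

end Radial

section RadialEigen

variable {φ φ' φ'' : ℝ → ℝ} {x : E4}

theorem lap_comp_norm_sq {d : ℝ}
    (hφ : ∀ᶠ t in 𝓝 (‖x‖ ^ 2), HasDerivAt φ (φ' t) t) (hφ' : HasDerivAt φ' d (‖x‖ ^ 2)) :
    lap (fun y => φ (‖y‖ ^ 2)) x = 8 * φ' (‖x‖ ^ 2) + 4 * ‖x‖ ^ 2 * d := by
  have hsum := (EuclideanSpace.basisFun (Fin 4) ℝ).sum_fderiv_fderiv_comp_norm_sq hφ hφ'
  simp only [EuclideanSpace.basisFun_apply, Fintype.card_fin] at hsum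
  rw [lap, hsum]
  ring

theorem driftedEigen_comp_norm_sq (hx : x ≠ 0)
    (hφ : ∀ t > 0, HasDerivAt φ (φ' t) t) (hφ' : ∀ t > 0, HasDerivAt φ' (φ'' t) t)
    (hode : ∀ t > 0, 4 * t * φ'' t + (8 - t) * φ' t = φ t) :
    DriftedEigen (fun y => φ (‖y‖ ^ 2)) x := by
  have ht : 0 < ‖x‖ ^ 2 := by positivity
  rw [DriftedEigen, lap_comp_norm_sq (eventually_gt_nhds ht |>.mono hφ) (hφ' _ ht),
    fderiv_comp_norm_sq_apply (hφ _ ht), real_inner_self_eq_norm_sq, ← hode _ ht]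
  ring

end RadialEigen

theorem hasDerivAt_neg_inv_sq {t : ℝ} (ht : t ≠ 0) :
    HasDerivAt (fun s => -(s ^ 2)⁻¹) (2 * (t ^ 3)⁻¹) t :=
  ((hasDerivAt_pow 2 t).inv (pow_ne_zero 2 ht)).neg.congr_deriv <| by field_simp; ring

theorem HasDerivAt.exp_div_four_mul {ψ : ℝ → ℝ} {ψ' t : ℝ} (hψ : HasDerivAt ψ ψ' t) :
    HasDerivAt (fun s => Real.exp (s / 4) * ψ s) (Real.exp (t / 4) * (ψ t / 4 + ψ')) t :=
  (((hasDerivAt_id t).div_const 4).exp.mul hψ).congr_deriv <| by simp; ring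

/-- **The two singular radial solutions.** The functions `v(x) = |x|⁻²` and
`w(x) = e^{|x|²/4}·|x|⁻²` both satisfy `Δv − (1/2)⟨x, ∇v⟩ = v` on `ℝ⁴ ∖ {0}`. -/
theorem green_type_solutions :
    ∀ x : E4, x ≠ 0 →
      DriftedEigen (fun y : E4 => (‖y‖ ^ 2)⁻¹) x ∧
      DriftedEigen (fun y : E4 => Real.exp (‖y‖ ^ 2 / 4) * (‖y‖ ^ 2)⁻¹) x := by
  intro x hx
  have hinv : ∀ t > (0 : ℝ), HasDerivAt (·⁻¹) (-(t ^ 2)⁻¹) t := fun t ht => hasDerivAt_inv ht.ne'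
  have hw' : ∀ t > (0 : ℝ), HasDerivAt (fun s => s⁻¹ / 4 + -(s ^ 2)⁻¹)
      (-(t ^ 2)⁻¹ / 4 + 2 * (t ^ 3)⁻¹) t := fun t ht =>
    ((hinv t ht).div_const 4).add (hasDerivAt_neg_inv_sq ht.ne')
  refine ⟨driftedEigen_comp_norm_sq hx hinv (fun t ht => hasDerivAt_neg_inv_sq ht.ne') ?_,
    driftedEigen_comp_norm_sq hx (fun t ht => (hinv t ht).exp_div_four_mul)
      (fun t ht => (hw' t ht).exp_div_four_mul) ?_⟩
  all_goals intro t ht; field_simp; ring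
end

section
/- Let u : ℝ⁴ → ℝ be a C² function that is bounded on all of ℝ⁴ and satisfies Δu(x) − (1/2)⟨x, ∇u(x)⟩ = u(x) for every x ∈ ℝ⁴. Then u is identically zero. -/
open Filter Topology

theorem IsLocalMax.deriv_deriv_nonpos {f : ℝ → ℝ} {a : ℝ} (h : IsLocalMax f a)
    (hc : ContinuousAt f a) : deriv (deriv f) a ≤ 0 := by
  by_contra! hpos
  have hmin : IsLocalMin f a := isLocalMin_of_deriv_deriv_pos hpos h.deriv_eq_zero hc
  have hconst : f =ᶠ[𝓝 a] fun _ => f a := h.mp (hmin.mono fun _ h₁ h₂ => le_antisymm h₂ h₁)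
  have hderiv : deriv f =ᶠ[𝓝 a] fun _ => 0 := by simpa using hconst.deriv
  simp [hderiv.deriv_eq] at hpos

theorem exists_forall_sub_const_mul_norm_sq_le {E : Type*} [SeminormedAddCommGroup E]
    [ProperSpace E] {u : E → ℝ} (hu : Continuous u) {C : ℝ} (hC : ∀ x, u x ≤ C) {ε : ℝ}
    (hε : 0 < ε) :
    ∃ a, ∀ y, u y - ε * ‖y‖ ^ 2 ≤ u a - ε * ‖a‖ ^ 2 := by
  refine (hu.sub (by fun_prop)).exists_forall_ge ?_
  have hbound : Tendsto (fun y : E => C - ε * ‖y‖ ^ 2) (cocompact E) atBot :=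
    tendsto_atBot_add_const_left _ C <| tendsto_neg_atTop_atBot.comp <|
      (tendsto_pow_atTop two_ne_zero |>.comp tendsto_norm_cocompact_atTop).const_mul_atTop hε
  exact tendsto_atBot_mono (fun y => by simp only [Pi.sub_apply]; linarith [hC y]) hbound

section

variable {E : Type*} [NormedAddCommGroup E] [NormedSpace ℝ E]

theorem ContDiff.differentiable_fderiv_apply {F : Type*} [NormedAddCommGroup F]
    [NormedSpace ℝ F] {v : E → F} (hv : ContDiff ℝ 2 v) (e : E) :
    Differentiable ℝ fun y => fderiv ℝ v y e :=
  ((hv.fderiv_right (by norm_num)).clm_apply contDiff_const).differentiable one_ne_zero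

theorem IsLocalMax.fderiv_fderiv_apply_nonpos {v : E → ℝ} {a : E} (h : IsLocalMax v a)
    (hv : Differentiable ℝ v) (e : E) (hw : DifferentiableAt ℝ (fun y => fderiv ℝ v y e) a) :
    fderiv ℝ (fun y => fderiv ℝ v y e) a e ≤ 0 := by
  have hline : ∀ t : ℝ, HasDerivAt (fun s : ℝ => a + s • e) e t := fun t => by
    simpa using ((hasDerivAt_id t).smul_const e).const_add a
  have hderiv : deriv (fun t : ℝ => v (a + t • e)) = fun t => fderiv ℝ v (a + t • e) e :=
    funext fun t => ((hv _).hasFDerivAt.comp_hasDerivAt t (hline t)).deriv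
  have hderiv2 : deriv (fun t : ℝ => fderiv ℝ v (a + t • e) e) 0 =
      fderiv ℝ (fun y => fderiv ℝ v y e) a e := by
    have hw₀ : DifferentiableAt ℝ (fun y => fderiv ℝ v y e) (a + (0 : ℝ) • e) := by simpa using hw
    have := (hw₀.hasFDerivAt.comp_hasDerivAt 0 (hline 0)).deriv
    rwa [zero_smul, add_zero] at this
  have hmax : IsLocalMax (fun t : ℝ => v (a + t • e)) 0 :=
    IsLocalMax.comp_continuous (g := fun t : ℝ => a + t • e) (by simpa using h) (by fun_prop)
  rw [← hderiv2, ← hderiv]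
  exact hmax.deriv_deriv_nonpos (hv.continuous.comp (by fun_prop)).continuousAt

theorem fderiv_fderiv_apply_sub {v w : E → ℝ} (hv : ContDiff ℝ 2 v) (hw : ContDiff ℝ 2 w)
    (e e' x : E) :
    fderiv ℝ (fun y => fderiv ℝ (v - w) y e) x e' =
      fderiv ℝ (fun y => fderiv ℝ v y e) x e' - fderiv ℝ (fun y => fderiv ℝ w y e) x e' := by
  have hfun : (fun y => fderiv ℝ (v - w) y e) = fun y => fderiv ℝ v y e - fderiv ℝ w y e := by
    funext y
    rw [fderiv_sub (hv.differentiable two_ne_zero y) (hw.differentiable two_ne_zero y)]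
    rfl
  rw [hfun, fderiv_fun_sub (hv.differentiable_fderiv_apply e x) (hw.differentiable_fderiv_apply e x)]
  rfl

theorem fderiv_fderiv_apply_neg (v : E → ℝ) (e e' x : E) :
    fderiv ℝ (fun y => fderiv ℝ (-v) y e) x e' = -fderiv ℝ (fun y => fderiv ℝ v y e) x e' := by
  have hfun : (fun y => fderiv ℝ (-v) y e) = fun y => -fderiv ℝ v y e := by
    funext y
    rw [fderiv_neg]
    rfl
  rw [hfun, fderiv_fun_neg]
  rfl

end

section

variable {F : Type*} [NormedAddCommGroup F] [InnerProductSpace ℝ F]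

theorem fderiv_const_mul_norm_sq_apply (c : ℝ) (x h : F) :
    fderiv ℝ (fun y => c * ‖y‖ ^ 2) x h = 2 * c * inner ℝ x h := by
  rw [((hasStrictFDerivAt_norm_sq x).hasFDerivAt.const_mul c).fderiv]
  simp only [smul_apply, coe_innerSL_apply, nsmul_eq_mul, Nat.cast_ofNat, smul_eq_mul]
  ring

theorem fderiv_fderiv_apply_const_mul_norm_sq (c : ℝ) (e e' x : F) :
    fderiv ℝ (fun y => fderiv ℝ (fun z => c * ‖z‖ ^ 2) y e) x e' = 2 * c * inner ℝ e' e := by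
  have hfun : (fun y => fderiv ℝ (fun z => c * ‖z‖ ^ 2) y e) = fun y => 2 * c * innerSL ℝ e y := by
    funext y
    rw [fderiv_const_mul_norm_sq_apply, coe_innerSL_apply, real_inner_comm]
  rw [hfun, ((innerSL ℝ e).hasFDerivAt.const_mul (2 * c)).fderiv]
  simp only [smul_apply, coe_innerSL_apply, smul_eq_mul, real_inner_comm]

end

theorem lap_sub {v w : E4 → ℝ} (hv : ContDiff ℝ 2 v) (hw : ContDiff ℝ 2 w) (x : E4) :
    lap (v - w) x = lap v x - lap w x := by
  simp only [lap, fderiv_fderiv_apply_sub hv hw, Finset.sum_sub_distrib]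

theorem lap_neg (v : E4 → ℝ) (x : E4) : lap (-v) x = -lap v x := by
  simp only [lap, fderiv_fderiv_apply_neg, Finset.sum_neg_distrib]

theorem lap_const_mul_norm_sq (c : ℝ) (x : E4) : lap (fun y => c * ‖y‖ ^ 2) x = 8 * c := by
  simp only [lap, fderiv_fderiv_apply_const_mul_norm_sq, real_inner_self_eq_norm_sq,
    PiLp.norm_single, norm_one, one_pow, mul_one, Fin.sum_const, nsmul_eq_mul]
  ring

theorem lap_nonpos_of_isLocalMax {v : E4 → ℝ} {x : E4} (hv : ContDiff ℝ 2 v)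
    (h : IsLocalMax v x) : lap v x ≤ 0 :=
  Finset.sum_nonpos fun _ _ => h.fderiv_fderiv_apply_nonpos (hv.differentiable two_ne_zero) _
    (hv.differentiable_fderiv_apply _ x)

theorem DriftedEigen.neg {v : E4 → ℝ} {x : E4} (h : DriftedEigen v x) : DriftedEigen (-v) x := by
  rw [DriftedEigen, lap_neg, fderiv_neg, neg_apply, Pi.neg_apply, ← h]
  ring

theorem le_mul_eight_add_norm_sq_of_driftedEigen {u : E4 → ℝ} (hu : ContDiff ℝ 2 u) {C : ℝ}
    (hC : ∀ x, u x ≤ C) (heq : ∀ x, DriftedEigen u x) {ε : ℝ} (hε : 0 < ε) (x : E4) :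
    u x ≤ ε * (8 + ‖x‖ ^ 2) := by
  set q : E4 → ℝ := fun y => ε * ‖y‖ ^ 2
  have hq : ContDiff ℝ 2 q := contDiff_const.mul (contDiff_norm_sq ℝ)
  obtain ⟨a, ha⟩ := exists_forall_sub_const_mul_norm_sq_le hu.continuous hC hε
  have hmax : IsLocalMax (u - q) a := Eventually.of_forall ha
  have hgrad : fderiv ℝ u a a = 2 * ε * ‖a‖ ^ 2 := by
    have h := congrArg (· a) hmax.fderiv_eq_zero
    simp only [fderiv_sub (hu.differentiable two_ne_zero a) (hq.differentiable two_ne_zero a),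
      sub_apply, zero_apply, q, fderiv_const_mul_norm_sq_apply, real_inner_self_eq_norm_sq] at h
    linarith
  have hlap : lap u a ≤ 8 * ε := by
    have h := lap_nonpos_of_isLocalMax (v := u - q) (hu.sub hq) hmax
    rw [lap_sub hu hq, lap_const_mul_norm_sq] at h
    linarith
  have hua : u a ≤ 8 * ε - ε * ‖a‖ ^ 2 := by
    have h : lap u a - 1 / 2 * fderiv ℝ u a a = u a := heq a
    linarith
  have hpen : 0 ≤ ε * ‖a‖ ^ 2 := by positivity
  linarith [ha x]

theorem nonpos_of_driftedEigen {u : E4 → ℝ} (hu : ContDiff ℝ 2 u) {C : ℝ}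
    (hC : ∀ x, u x ≤ C) (heq : ∀ x, DriftedEigen u x) (x : E4) : u x ≤ 0 := by
  refine le_of_forall_gt_imp_ge_of_dense fun δ hδ => ?_
  have hK : 0 < 8 + ‖x‖ ^ 2 := by positivity
  calc u x ≤ δ / (8 + ‖x‖ ^ 2) * (8 + ‖x‖ ^ 2) :=
        le_mul_eight_add_norm_sq_of_driftedEigen hu hC heq (div_pos hδ hK) x
    _ = δ := div_mul_cancel₀ δ hK.ne'

/-- **Liouville theorem for the drifted Laplacian.** A bounded `C²` function on all of
`ℝ⁴` satisfying `Δu − (1/2)⟨x, ∇u⟩ = u` everywhere is identically zero. -/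
theorem liouville_drifted
    (u : E4 → ℝ)
    (hu : ContDiff ℝ 2 u)
    (hbdd : ∃ C : ℝ, ∀ x : E4, |u x| ≤ C)
    (heq : ∀ x : E4, DriftedEigen u x) :
    ∀ x : E4, u x = 0 := by
  obtain ⟨C, hC⟩ := hbdd
  intro x
  have hle : u x ≤ 0 := nonpos_of_driftedEigen hu (fun y => (abs_le.mp (hC y)).2) heq x
  have hge : -u x ≤ 0 := nonpos_of_driftedEigen hu.neg (fun y => neg_le.mp (abs_le.mp (hC y)).1)
    (fun y => (heq y).neg) x
  linarith
end

section
/- Let u : ℝ⁴ → ℝ be a C² function satisfying Δu(x) − (1/2)⟨x, ∇u(x)⟩ = u(x) for every x ∈ ℝ⁴, and let φ : ℝ⁴ → ℝ be a smooth function with compact support. Then ∫_{ℝ⁴} |∇(φu)(x)|² e^{−|x|²/4} dx ≤ ∫_{ℝ⁴} |∇φ(x)|² u(x)² e^{−|x|²/4} dx. -/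
open MeasureTheory Metric

/-! ### Auxiliary definitions and lemmas -/

/-- The `i`-th standard basis vector. -/
noncomputable def ee (i : Fin 4) : E4 := EuclideanSpace.single i (1 : ℝ)

/-- The Gaussian weight. -/
noncomputable def rho : E4 → ℝ := fun x => Real.exp ((-(1:ℝ)/4) * ‖x‖ ^ 2)

lemma rho_eq (x : E4) : Real.exp (-‖x‖ ^ 2 / 4) = rho x := by
  unfold rho; congr 1; ring

lemma rho_pos (x : E4) : 0 < rho x := Real.exp_pos _

lemma rho_contDiff : ContDiff ℝ 1 rho := by
  unfold rho
  exact Real.contDiff_exp.comp (contDiff_const.mul (contDiff_norm_sq ℝ))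

lemma rho_hasFDerivAt (x : E4) :
    HasFDerivAt rho (Real.exp ((-(1:ℝ)/4) * ‖x‖ ^ 2) • ((-(1:ℝ)/4) • (2 • (innerSL ℝ x)))) x := by
  have h1 : HasFDerivAt (fun y : E4 => ‖y‖ ^ 2) (2 • (innerSL ℝ x)) x :=
    (hasStrictFDerivAt_norm_sq x).hasFDerivAt
  have h2 : HasFDerivAt (fun y : E4 => (-(1:ℝ)/4) * ‖y‖ ^ 2)
      ((-(1:ℝ)/4) • (2 • (innerSL ℝ x))) x := h1.const_mul _
  exact (Real.hasDerivAt_exp _).comp_hasFDerivAt x h2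

lemma fderiv_rho_apply (x v : E4) :
    fderiv ℝ rho x v = (-(1:ℝ)/2) * (inner ℝ x v : ℝ) * rho x := by
  rw [(rho_hasFDerivAt x).fderiv]
  simp only [ContinuousLinearMap.smul_apply, smul_eq_mul, innerSL_apply_apply, rho,
    ContinuousLinearMap.coe_smul', Pi.smul_apply]
  ring

lemma inner_ee (x : E4) (i : Fin 4) : (inner ℝ x (ee i) : ℝ) = x i := by
  rw [ee, real_inner_comm]
  simp [EuclideanSpace.inner_single_left]

lemma coord_sum (x : E4) : ∑ i : Fin 4, x i • ee i = x := by
  ext j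
  rw [show (∑ i : Fin 4, x i • ee i) j = ∑ i : Fin 4, (x i • ee i) j by
    simp]
  simp [ee, EuclideanSpace.single_apply]

lemma fderiv_apply_self (g : E4 → ℝ) (x : E4) :
    fderiv ℝ g x x = ∑ i : Fin 4, x i * fderiv ℝ g x (ee i) := by
  have h : fderiv ℝ g x x = fderiv ℝ g x (∑ i : Fin 4, x i • ee i) := by rw [coord_sum]
  rw [h, map_sum]
  simp [smul_eq_mul]

lemma grad_coord (g : E4 → ℝ) (x : E4) (i : Fin 4) :
    gradient g x i = fderiv ℝ g x (ee i) := by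
  have hgr : gradient g x = (InnerProductSpace.toDual ℝ E4).symm (fderiv ℝ g x) := rfl
  have h := InnerProductSpace.toDual_symm_apply (𝕜 := ℝ) (E := E4)
    (x := ee i) (y := fderiv ℝ g x)
  rw [← hgr] at h
  rw [← h, real_inner_comm]
  rw [ee, EuclideanSpace.inner_single_left]; simp

lemma grad_sq (g : E4 → ℝ) (x : E4) :
    ‖gradient g x‖ ^ 2 = ∑ i : Fin 4, (fderiv ℝ g x (ee i)) ^ 2 := by
  rw [EuclideanSpace.norm_eq, Real.sq_sqrt (by positivity)]
  refine Finset.sum_congr rfl fun i _ => ?_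
  rw [show ‖gradient g x i‖ = |gradient g x i| from rfl, sq_abs, grad_coord g x i]

lemma ibp (F G : E4 → ℝ) (hF : ContDiff ℝ 1 F) (hG : ContDiff ℝ 1 G)
    (hGc : HasCompactSupport G) (v : E4) :
    ∫ x : E4, fderiv ℝ F x v * G x = -∫ x : E4, fderiv ℝ G x v * F x := by
  obtain ⟨r, hr⟩ := hGc.isBounded.subset_closedBall 0
  set R : ℝ := max r 0 + 1 with hR
  have hsub : tsupport G ⊆ closedBall (0 : E4) (max r 0) :=
    hr.trans (closedBall_subset_closedBall (le_max_left _ _))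
  set χ : ContDiffBump (0 : E4) := ⟨R, R + 1, by positivity, by linarith⟩ with hχdef
  set f : E4 → ℝ := fun y => χ y * F y with hfdef
  have hχ1 : ∀ y ∈ ball (0 : E4) R, χ y = 1 := fun y hy =>
    χ.one_of_mem_closedBall (ball_subset_closedBall hy)
  have hfc : HasCompactSupport f := χ.hasCompactSupport.mul_right
  have hf : ContDiff ℝ 1 f := (χ.contDiff).mul hF
  obtain ⟨C, hC⟩ := ContDiff.lipschitzWith_of_hasCompactSupport hfc hf one_ne_zero
  obtain ⟨D, hD⟩ := ContDiff.lipschitzWith_of_hasCompactSupport hGc hG one_ne_zero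
  have key := LipschitzWith.integral_lineDeriv_mul_eq (μ := (volume : Measure E4)) hC hD hGc v
  -- identify f-near-support facts
  have hsubball : tsupport G ⊆ ball (0 : E4) R := by
    refine hsub.trans ?_
    intro y hy
    have h1 : dist y 0 ≤ max r 0 := mem_closedBall.1 hy
    exact mem_ball.2 (by show dist y 0 < max r 0 + 1; linarith)
  have hfeqF : ∀ x ∈ tsupport G, f =ᶠ[nhds x] F := by
    intro x hx
    filter_upwards [isOpen_ball.mem_nhds (hsubball hx)] with y hy
    simp [hfdef, hχ1 y hy]
  have hL : ∀ x : E4, lineDeriv ℝ f x v * G x = fderiv ℝ F x v * G x := by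
    intro x
    by_cases hx : x ∈ tsupport G
    · have h1 : lineDeriv ℝ f x v = fderiv ℝ f x v :=
        (((hf.differentiable one_ne_zero) x).hasFDerivAt.hasLineDerivAt v).lineDeriv
      rw [h1, (hfeqF x hx).fderiv_eq]
    · have : G x = 0 := image_eq_zero_of_notMem_tsupport hx
      rw [this, mul_zero, mul_zero]
  have hRt : ∀ x : E4, lineDeriv ℝ G x (-v) * f x = -(fderiv ℝ G x v * F x) := by
    intro x
    have h1 : lineDeriv ℝ G x (-v) = -fderiv ℝ G x v := by
      rw [(((hG.differentiable one_ne_zero) x).hasFDerivAt.hasLineDerivAt (-v)).lineDeriv, map_neg]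
    rw [h1]
    by_cases hx : x ∈ tsupport G
    · have : f x = F x := by simp [hfdef, hχ1 x (hsubball hx)]
      rw [this]; ring
    · have : fderiv ℝ G x = 0 := (HasFDerivAt.of_notMem_tsupport ℝ hx).fderiv
      rw [this]; simp
  calc ∫ x : E4, fderiv ℝ F x v * G x = ∫ x : E4, lineDeriv ℝ f x v * G x := by
        exact integral_congr_ae (Filter.Eventually.of_forall fun x => (hL x).symm)
    _ = ∫ x : E4, lineDeriv ℝ G x (-v) * f x := key
    _ = ∫ x : E4, -(fderiv ℝ G x v * F x) := integral_congr_ae (Filter.Eventually.of_forall hRt)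
    _ = -∫ x : E4, fderiv ℝ G x v * F x := integral_neg _

/-- **Caccioppoli-type energy inequality.** If `u` is `C²` on `ℝ⁴` and satisfies
`Δu − (1/2)⟨x, ∇u⟩ = u` everywhere, then for every smooth compactly supported `φ`,
`∫ |∇(φu)|² dμ ≤ ∫ |∇φ|²·u² dμ`, where `dμ = e^{−|x|²/4} dx` is the Gaussian-weighted
Lebesgue measure. -/
theorem caccioppoli_inequality
    (u : E4 → ℝ)
    (hu : ContDiff ℝ 2 u)
    (heq : ∀ x : E4, DriftedEigen u x)
    (φ : E4 → ℝ)
    (hφ : ContDiff ℝ (⊤ : ℕ∞) φ)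
    (hφc : HasCompactSupport φ) :
    ∫ x : E4, ‖gradient (fun y : E4 => φ y * u y) x‖ ^ 2 * Real.exp (-‖x‖ ^ 2 / 4)
      ≤ ∫ x : E4, ‖gradient φ x‖ ^ 2 * (u x) ^ 2 * Real.exp (-‖x‖ ^ 2 / 4) := by
  simp only [rho_eq]
  have hu1 : ContDiff ℝ 1 u := hu.of_le (by norm_num)
  have hφ1 : ContDiff ℝ 1 φ := hφ.of_le (by simp)
  have hφ2 : ContDiff ℝ 2 φ := hφ.of_le (WithTop.coe_le_coe.mpr (le_top : (2:ℕ∞) ≤ ⊤))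
  set B : Fin 4 → E4 → ℝ := fun i x => fderiv ℝ u x (ee i) with hB
  set A : Fin 4 → E4 → ℝ := fun i x => fderiv ℝ φ x (ee i) with hA
  set w : E4 → ℝ := fun x => φ x * (φ x * u x) with hw
  have hBc1 : ∀ i, ContDiff ℝ 1 (B i) := fun i =>
    (hu.fderiv_right (m := 1) (by norm_num)).clm_apply contDiff_const
  have hAc1 : ∀ i, ContDiff ℝ 1 (A i) := fun i =>
    (hφ2.fderiv_right (m := 1) (by norm_num)).clm_apply contDiff_const
  have hw1 : ContDiff ℝ 1 w := hφ1.mul (hφ1.mul hu1)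
  have hwc : HasCompactSupport w := hφc.mul_right
  have hFi : ∀ i, ContDiff ℝ 1 (fun x => B i x * rho x) := fun i => (hBc1 i).mul rho_contDiff
  -- differentiability points
  have hBd : ∀ i x, DifferentiableAt ℝ (B i) x := fun i x => ((hBc1 i).differentiable one_ne_zero) x
  have hrd : ∀ x : E4, DifferentiableAt ℝ rho x := fun x => (rho_contDiff.differentiable one_ne_zero) x
  have hud : ∀ x, DifferentiableAt ℝ u x := fun x => (hu1.differentiable one_ne_zero) x
  have hφd : ∀ x, DifferentiableAt ℝ φ x := fun x => (hφ1.differentiable one_ne_zero) x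
  -- integration by parts, coordinate by coordinate
  have key : ∀ i, ∫ x : E4, fderiv ℝ (fun y => B i y * rho y) x (ee i) * w x
      = -∫ x : E4, fderiv ℝ w x (ee i) * (B i x * rho x) := fun i =>
    ibp _ w (hFi i) hw1 hwc (ee i)
  -- pointwise product rule for P
  have hPpt : ∀ i x, fderiv ℝ (fun y => B i y * rho y) x (ee i)
      = B i x * ((-(1:ℝ)/2) * x i * rho x) + rho x * fderiv ℝ (B i) x (ee i) := by
    intro i x
    rw [fderiv_fun_mul (hBd i x) (hrd x)]
    simp only [ContinuousLinearMap.add_apply, ContinuousLinearMap.smul_apply, smul_eq_mul]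
    rw [fderiv_rho_apply, inner_ee]
  -- the second-derivative sum is the Laplacian
  have hlap : ∀ x, ∑ i : Fin 4, fderiv ℝ (B i) x (ee i) = lap u x := by
    intro x
    simp only [hB, lap, ee]
  -- pointwise sum identity
  have hsumP : ∀ x, (∑ i : Fin 4, fderiv ℝ (fun y => B i y * rho y) x (ee i) * w x)
      = u x * w x * rho x := by
    intro x
    have he : lap u x - (1 / 2) * fderiv ℝ u x x = u x := heq x
    have hx2 : fderiv ℝ u x x = ∑ i : Fin 4, x i * B i x := by
      rw [fderiv_apply_self u x]
    calc (∑ i : Fin 4, fderiv ℝ (fun y => B i y * rho y) x (ee i) * w x)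
        = ∑ i : Fin 4, ((fderiv ℝ (B i) x (ee i)) * (rho x * w x)
            + (x i * B i x) * ((-(1:ℝ)/2) * rho x * w x)) := by
          refine Finset.sum_congr rfl fun i _ => ?_
          rw [hPpt i x]; ring
      _ = (∑ i : Fin 4, fderiv ℝ (B i) x (ee i)) * (rho x * w x)
            + (∑ i : Fin 4, x i * B i x) * ((-(1:ℝ)/2) * rho x * w x) := by
          rw [Finset.sum_add_distrib, ← Finset.sum_mul, ← Finset.sum_mul]
      _ = u x * w x * rho x := by
          rw [hlap, ← hx2]
          linear_combination (rho x * w x) * he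
  -- integrability of the P-integrands
  have hPint : ∀ i, Integrable (fun x : E4 => fderiv ℝ (fun y => B i y * rho y) x (ee i) * w x) := by
    intro i
    have hc : Continuous (fun x : E4 => fderiv ℝ (fun y => B i y * rho y) x (ee i)) :=
      ((hFi i).continuous_fderiv one_ne_zero).clm_apply continuous_const
    exact (hc.mul hw1.continuous).integrable_of_hasCompactSupport hwc.mul_left
  -- integrability of the Q-integrands
  have hQint : ∀ i, Integrable (fun x : E4 => fderiv ℝ w x (ee i) * (B i x * rho x)) := by
    intro i
    have hc : Continuous (fun x : E4 => fderiv ℝ w x (ee i)) :=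
      (hw1.continuous_fderiv one_ne_zero).clm_apply continuous_const
    have hcs : HasCompactSupport (fun x : E4 => fderiv ℝ w x (ee i)) := hwc.fderiv_apply ℝ (ee i)
    exact (hc.mul ((hBc1 i).continuous.mul rho_contDiff.continuous)).integrable_of_hasCompactSupport
      hcs.mul_right
  have e1 : ∑ i : Fin 4, ∫ x : E4, fderiv ℝ (fun y => B i y * rho y) x (ee i) * w x
      = ∫ x : E4, u x * w x * rho x := by
    rw [← integral_finset_sum Finset.univ (fun i _ => hPint i)]
    exact integral_congr_ae (.of_forall fun x => hsumP x)
  have e2 : ∑ i : Fin 4, ∫ x : E4, fderiv ℝ w x (ee i) * (B i x * rho x)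
      = ∫ x : E4, (∑ i : Fin 4, fderiv ℝ w x (ee i) * (B i x * rho x)) := by
    rw [← integral_finset_sum Finset.univ (fun i _ => hQint i)]
  have h3 : (∑ i : Fin 4, ∫ x : E4, fderiv ℝ (fun y => B i y * rho y) x (ee i) * w x)
      = -∑ i : Fin 4, ∫ x : E4, fderiv ℝ w x (ee i) * (B i x * rho x) := by
    rw [← Finset.sum_neg_distrib]
    exact Finset.sum_congr rfl fun i _ => key i
  have estar : ∫ x : E4, (∑ i : Fin 4, fderiv ℝ w x (ee i) * (B i x * rho x))
      = -∫ x : E4, u x * w x * rho x := by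
    rw [← e2, ← e1]; linarith [h3]
  -- pointwise product rules for φ·u and w
  have hfderiv_pu : ∀ (i : Fin 4) (x : E4), fderiv ℝ (fun y => φ y * u y) x (ee i)
      = φ x * B i x + u x * A i x := by
    intro i x
    rw [fderiv_fun_mul (hφd x) (hud x)]
    simp only [ContinuousLinearMap.add_apply, ContinuousLinearMap.smul_apply, smul_eq_mul, hB, hA]
  have hfderiv_w : ∀ (i : Fin 4) (x : E4), fderiv ℝ w x (ee i)
      = φ x * (φ x * B i x + u x * A i x) + (φ x * u x) * A i x := by
    intro i x
    have : fderiv ℝ w x = φ x • fderiv ℝ (fun y => φ y * u y) x + (φ x * u x) • fderiv ℝ φ x :=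
      fderiv_mul (hφd x) ((hφd x).mul (hud x))
    rw [this]
    simp only [ContinuousLinearMap.add_apply, ContinuousLinearMap.smul_apply, smul_eq_mul, hA,
      hfderiv_pu i x]
  -- main pointwise identity
  have hpt2 : ∀ x : E4, ‖gradient (fun y : E4 => φ y * u y) x‖ ^ 2 * rho x
      = (∑ i : Fin 4, fderiv ℝ w x (ee i) * (B i x * rho x))
        + ‖gradient φ x‖ ^ 2 * (u x) ^ 2 * rho x := by
    intro x
    calc ‖gradient (fun y : E4 => φ y * u y) x‖ ^ 2 * rho x
        = ∑ i : Fin 4, (fderiv ℝ w x (ee i) * (B i x * rho x)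
            + (A i x) ^ 2 * ((u x) ^ 2 * rho x)) := by
          rw [grad_sq, Finset.sum_mul]
          refine Finset.sum_congr rfl fun i _ => ?_
          rw [hfderiv_pu i x, hfderiv_w i x]; ring
      _ = (∑ i : Fin 4, fderiv ℝ w x (ee i) * (B i x * rho x))
            + (∑ i : Fin 4, (A i x) ^ 2) * ((u x) ^ 2 * rho x) := by
          rw [Finset.sum_add_distrib, Finset.sum_mul]
      _ = (∑ i : Fin 4, fderiv ℝ w x (ee i) * (B i x * rho x))
            + ‖gradient φ x‖ ^ 2 * (u x) ^ 2 * rho x := by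
          rw [grad_sq φ x]
          simp only [hA]
          ring
  -- integrability of the two pieces
  have hint1 : Integrable (fun x : E4 => ∑ i : Fin 4, fderiv ℝ w x (ee i) * (B i x * rho x)) :=
    integrable_finset_sum _ (fun i _ => hQint i)
  have hgradφ_cs : HasCompactSupport (fun x : E4 => ‖gradient φ x‖ ^ 2) := by
    have h1 : HasCompactSupport (gradient φ) := by
      have : gradient φ = (fun L : E4 →L[ℝ] ℝ => (InnerProductSpace.toDual ℝ E4).symm L) ∘
          (fderiv ℝ φ) := rfl
      rw [this]
      exact (hφc.fderiv ℝ).comp_left (by simp)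
    exact h1.comp_left (g := fun y : E4 => ‖y‖ ^ 2) (by simp)
  have hgradφ_cont : Continuous (fun x : E4 => ‖gradient φ x‖ ^ 2) := by
    have h1 : Continuous (gradient φ) :=
      (InnerProductSpace.toDual ℝ E4).symm.continuous.comp (hφ1.continuous_fderiv one_ne_zero)
    exact (h1.norm).pow 2
  have hint2 : Integrable (fun x : E4 => ‖gradient φ x‖ ^ 2 * (u x) ^ 2 * rho x) := by
    have hc : Continuous (fun x : E4 => ‖gradient φ x‖ ^ 2 * (u x) ^ 2 * rho x) :=
      (hgradφ_cont.mul ((hu1.continuous).pow 2)).mul rho_contDiff.continuous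
    have hcs : HasCompactSupport (fun x : E4 => ‖gradient φ x‖ ^ 2 * (u x) ^ 2 * rho x) :=
      (hgradφ_cs.mul_right).mul_right
    exact hc.integrable_of_hasCompactSupport hcs
  have hnonneg : 0 ≤ ∫ x : E4, u x * w x * rho x := by
    refine integral_nonneg fun x => ?_
    simp only [Pi.zero_apply, hw]
    nlinarith [sq_nonneg (φ x * u x), (rho_pos x).le]
  calc ∫ x : E4, ‖gradient (fun y : E4 => φ y * u y) x‖ ^ 2 * rho x
      = ∫ x : E4, ((∑ i : Fin 4, fderiv ℝ w x (ee i) * (B i x * rho x))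
          + ‖gradient φ x‖ ^ 2 * (u x) ^ 2 * rho x) :=
        integral_congr_ae (.of_forall hpt2)
    _ = (∫ x : E4, (∑ i : Fin 4, fderiv ℝ w x (ee i) * (B i x * rho x)))
          + ∫ x : E4, ‖gradient φ x‖ ^ 2 * (u x) ^ 2 * rho x :=
        integral_add hint1 hint2
    _ = -(∫ x : E4, u x * w x * rho x)
          + ∫ x : E4, ‖gradient φ x‖ ^ 2 * (u x) ^ 2 * rho x := by rw [estar]
    _ ≤ ∫ x : E4, ‖gradient φ x‖ ^ 2 * (u x) ^ 2 * rho x := by linarith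
end
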